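/- Let k ∈ [1, ∞), δ > 0, set k_* = k/(k−1) (with k_* = ∞ interpreted as the essential supremum norm when k = 1) and c_k(δ) = (1 + k(k−1)δ)^{1/k}, and let P1, P2 be probability measures on ℝ supported on [0, ∞). Then | sup_{α ∈ ℝ} { −c_k(δ) (E_{P1}[((α − Y)_+)^{k_*}])^{1/k_*} + α } − sup_{α ∈ ℝ} { −c_k(δ) (E_{P2}[((α − Y)_+)^{k_*}])^{1/k_*} + α } | ≤ c_k(δ) · sup_{t ∈ [0,1]} | q_{P1}(t) − q_{P2}(t) |, where Y denotes the identity random variable under each measure. -/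

import Mathlib

/-!
Both dual values are suprema over `α` of `-c ‖(α - Y)₊‖_{k_*} + α`. Realise `P₁` and `P₂` on one
probability space, as the images of the uniform distribution on `(0, 1)` under their quantile
functions `q₁`, `q₂`. If `q₁ ≤ q₂ + D`, then pointwise `(α - D - q₂)₊ ≤ (α - q₁)₊`, so the norm term
of `P₂` at `α - D` is at most that of `P₁` at `α`; shifting `α` by `D` gives
`V(P₁) ≤ V(P₂) + D` with `D = sup |q₁ - q₂|`, and `c_k(δ) ≥ 1` does the rest. Support in `[0, ∞)`
keeps `(α - Y)₊` bounded, and `c_k(δ) > 1` for `k > 1` keeps the suprema finite.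
-/

open MeasureTheory Real Set
open scoped ENNReal

/-- The `t`-quantile of a probability measure `P` on `ℝ`:
`q_P(t) = inf { x : t ≤ F_P(x) }`, where `F_P(x) = P(-∞, x]`. -/
noncomputable def quantile (P : Measure ℝ) (t : ℝ) : ℝ :=
  sInf {x : ℝ | t ≤ (P (Set.Iic x)).toReal}

/-- The Cressie–Read constant `c_k(δ) = (1 + k(k−1)δ)^{1/k}`. -/
noncomputable def ckCR (k δ : ℝ) : ℝ := (1 + k * (k - 1) * δ) ^ (1 / k)

/-- The Cressie–Read DRO dual value
`sup_{α ∈ ℝ} { −c_k(δ) (E_P[((α − Y)_+)^{k_*}])^{1/k_*} + α }` with `k_* = k/(k−1)`;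
for `k = 1` the `k_* = ∞` case is interpreted via the essential supremum norm. -/
noncomputable def dualValueCR (k δ : ℝ) (P : Measure ℝ) : ℝ :=
  sSup {r : ℝ | ∃ α : ℝ,
    r = -ckCR k δ *
        (if k = 1 then essSup (fun y : ℝ => max (α - y) 0) P
         else (∫ y, (max (α - y) 0) ^ (k / (k - 1)) ∂P) ^ ((k - 1) / k)) + α}

open ProbabilityTheory Filter
open scoped Topology

/-- The `L^{k_*}(μ)` norm of a nonnegative `h`, written as in `dualValueCR`. -/
noncomputable def crNorm {Ω : Type*} [MeasurableSpace Ω] (k : ℝ) (μ : Measure Ω) (h : Ω → ℝ) :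
    ℝ :=
  if k = 1 then essSup h μ else (∫ x, h x ^ (k / (k - 1)) ∂μ) ^ ((k - 1) / k)

lemma dualValueCR_eq (k δ : ℝ) (P : Measure ℝ) :
    dualValueCR k δ P = ⨆ α, -ckCR k δ * crNorm k P (fun y => max (α - y) 0) + α := by
  rw [iSup, dualValueCR]
  congr 1
  ext r
  simp [crNorm, eq_comm]

lemma one_le_ckCR {k δ : ℝ} (hk : 1 ≤ k) (hδ : 0 ≤ δ) : 1 ≤ ckCR k δ :=
  Real.one_le_rpow (le_add_of_nonneg_right (mul_nonneg (mul_nonneg (by linarith) (by linarith)) hδ))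
    (by positivity)

lemma one_lt_ckCR {k δ : ℝ} (hk : 1 < k) (hδ : 0 < δ) : 1 < ckCR k δ :=
  Real.one_lt_rpow (lt_add_of_pos_right _ (mul_pos (mul_pos (by linarith) (by linarith)) hδ))
    (by positivity)

-- No boundedness assumptions, unlike `essSup_map_measure_of_measurable`: the two sets whose
-- infima define the essential suprema coincide.
theorem essSup_map_of_measurable {α β : Type*} [MeasurableSpace α] [MeasurableSpace β]
    {μ : Measure α} {f : α → β} {g : β → ℝ} (hf : AEMeasurable f μ) (hg : Measurable g) :
    essSup g (μ.map f) = essSup (g ∘ f) μ := by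
  simp only [essSup_eq_sInf]
  congr 1
  ext a
  change μ.map f (g ⁻¹' Ioi a) = 0 ↔ μ (f ⁻¹' (g ⁻¹' Ioi a)) = 0
  rw [Measure.map_apply_of_aemeasurable hf (hg measurableSet_Ioi)]

section CRNorm

variable {Ω Ω' : Type*} [MeasurableSpace Ω] [MeasurableSpace Ω'] {μ : Measure Ω} {k : ℝ}

lemma crNorm_map {f : Ω → Ω'} {h : Ω' → ℝ} (hf : AEMeasurable f μ) (hh : Measurable h) :
    crNorm k (μ.map f) h = crNorm k μ (h ∘ f) := by
  unfold crNorm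
  split_ifs
  · exact essSup_map_of_measurable hf hh
  · rw [integral_map hf (hh.pow_const _).aestronglyMeasurable]
    rfl

lemma integrable_rpow_of_ae_le [IsFiniteMeasure μ] {h : Ω → ℝ} {B p : ℝ}
    (h_nonneg : 0 ≤ᵐ[μ] h) (h_le : ∀ᵐ x ∂μ, h x ≤ B) (h_meas : AEMeasurable h μ) (hp : 0 ≤ p) :
    Integrable (fun x => h x ^ p) μ := by
  refine .of_bound (h_meas.pow_const p).aestronglyMeasurable (B ^ p) ?_
  filter_upwards [h_nonneg, h_le] with x hx hxB
  rw [Real.norm_of_nonneg (Real.rpow_nonneg hx p)]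
  exact Real.rpow_le_rpow hx hxB hp

lemma crNorm_mono [IsFiniteMeasure μ] [NeZero μ] (hk : 1 ≤ k) {h₁ h₂ : Ω → ℝ} {B : ℝ}
    (h₁_nonneg : 0 ≤ h₁) (h₁₂ : h₁ ≤ᵐ[μ] h₂) (h₂_le : ∀ᵐ x ∂μ, h₂ x ≤ B)
    (h₂_meas : AEMeasurable h₂ μ) : crNorm k μ h₁ ≤ crNorm k μ h₂ := by
  unfold crNorm
  split_ifs with hk1
  · exact essSup_mono_ae h₁₂ (isCoboundedUnder_le_of_le _ h₁_nonneg)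
      (isBoundedUnder_of_eventually_le h₂_le)
  have hk1' : 0 < k - 1 := sub_pos.2 (lt_of_le_of_ne hk (Ne.symm hk1))
  have hp : 0 < k / (k - 1) := by positivity
  have h₂_nonneg : 0 ≤ᵐ[μ] h₂ := h₁₂.mono fun x hx => (h₁_nonneg x).trans hx
  refine Real.rpow_le_rpow (integral_nonneg fun x => Real.rpow_nonneg (h₁_nonneg x) _) ?_
    (by positivity)
  refine integral_mono_of_nonneg (ae_of_all _ fun x => Real.rpow_nonneg (h₁_nonneg x) _)
    (integrable_rpow_of_ae_le h₂_nonneg h₂_le h₂_meas hp.le) ?_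
  filter_upwards [h₁₂] with x hx
  exact Real.rpow_le_rpow (h₁_nonneg x) hx hp.le

lemma mul_rpow_le_crNorm [IsFiniteMeasure μ] (hk : 1 ≤ k) {h : Ω → ℝ} {B a : ℝ} {s : Set Ω}
    (h_nonneg : 0 ≤ h) (h_le : ∀ᵐ x ∂μ, h x ≤ B) (h_meas : AEMeasurable h μ)
    (ha : 0 ≤ a) (hs : MeasurableSet s) (hμs : μ s ≠ 0) (has : ∀ x ∈ s, a ≤ h x) :
    a * μ.real s ^ ((k - 1) / k) ≤ crNorm k μ h := by
  unfold crNorm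
  split_ifs with hk1
  · subst hk1
    rw [sub_self, zero_div, Real.rpow_zero, mul_one]
    by_contra! hlt
    have h_lt := ae_lt_of_essSup_lt hlt (isBoundedUnder_of_eventually_le h_le)
    exact hμs (measure_mono_null (fun x hx => not_lt.2 (has x hx)) (ae_iff.1 h_lt))
  have hk1' : 0 < k - 1 := sub_pos.2 (lt_of_le_of_ne hk (Ne.symm hk1))
  set p := k / (k - 1) with hp_def
  have hp : 0 < p := by positivity
  have hpe : p * ((k - 1) / k) = 1 := by rw [hp_def]; field_simp
  have h_ind : ∫ x, s.indicator (fun _ => a ^ p) x ∂μ ≤ ∫ x, h x ^ p ∂μ := by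
    refine integral_mono_of_nonneg (ae_of_all _ fun x => ?_)
      (integrable_rpow_of_ae_le (ae_of_all _ h_nonneg) h_le h_meas hp.le) (ae_of_all _ fun x => ?_)
    · exact indicator_nonneg (fun _ _ => Real.rpow_nonneg ha _) x
    · by_cases hx : x ∈ s
      · simpa [indicator_of_mem hx] using Real.rpow_le_rpow ha (has x hx) hp.le
      · simpa [indicator_of_notMem hx] using Real.rpow_nonneg (h_nonneg x) p
  rw [integral_indicator_const _ hs, smul_eq_mul] at h_ind
  calc a * μ.real s ^ ((k - 1) / k) = (μ.real s * a ^ p) ^ ((k - 1) / k) := by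
        rw [Real.mul_rpow measureReal_nonneg (Real.rpow_nonneg ha _), ← Real.rpow_mul ha, hpe,
          Real.rpow_one, mul_comm]
    _ ≤ _ := Real.rpow_le_rpow (by positivity) h_ind (by positivity)

end CRNorm

section Shortfall

variable {k δ : ℝ} {P : Measure ℝ}

lemma measurable_shortfall (α : ℝ) : Measurable fun y : ℝ => max (α - y) 0 := by
  fun_prop

lemma ae_shortfall_le (hP : P (Iio 0) = 0) (α : ℝ) :
    ∀ᵐ y ∂P, max (α - y) 0 ≤ max α 0 := by
  rw [ae_iff]
  refine measure_mono_null (fun y hy => ?_) hP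
  rw [mem_Iio]
  by_contra! h
  exact hy (max_le_max (by linarith) le_rfl)

lemma exists_one_le_ckCR_mul_rpow [IsProbabilityMeasure P] (hk : 1 ≤ k) (hδ : 0 < δ) :
    ∃ M, P (Iic M) ≠ 0 ∧ 1 ≤ ckCR k δ * P.real (Iic M) ^ ((k - 1) / k) := by
  have h_lim : Tendsto (fun M => P.real (Iic M)) atTop (𝓝 1) :=
    (tendsto_cdf_atTop P).congr (cdf_eq_real P)
  have h_pos : ∀ᶠ M in atTop, P (Iic M) ≠ 0 :=
    (h_lim.eventually_const_lt zero_lt_one).mono fun M hM h0 => by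
      rw [measureReal_def, h0, ENNReal.toReal_zero] at hM
      exact hM.false
  rcases eq_or_lt_of_le hk with rfl | hk1
  · obtain ⟨M, hM⟩ := h_pos.exists
    exact ⟨M, hM, by simp [ckCR]⟩
  have h_lim' : Tendsto (fun M => ckCR k δ * P.real (Iic M) ^ ((k - 1) / k)) atTop
      (𝓝 (ckCR k δ)) := by
    simpa using (h_lim.rpow_const (Or.inl one_ne_zero)).const_mul (ckCR k δ)
  exact (h_pos.and (h_lim'.eventually_const_le (one_lt_ckCR hk1 hδ))).exists

lemma bddAbove_dualValueCR [IsProbabilityMeasure P] (hk : 1 ≤ k) (hδ : 0 < δ)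
    (hP : P (Iio 0) = 0) :
    BddAbove (range fun α => -ckCR k δ * crNorm k P (fun y => max (α - y) 0) + α) := by
  obtain ⟨M, hM, hMc⟩ := exists_one_le_ckCR_mul_rpow (P := P) hk hδ
  refine ⟨M, forall_mem_range.2 fun α => ?_⟩
  have h_lower : max (α - M) 0 * P.real (Iic M) ^ ((k - 1) / k) ≤
      crNorm k P (fun y => max (α - y) 0) :=
    mul_rpow_le_crNorm hk (fun _ => le_max_right _ _) (ae_shortfall_le hP α)
      (measurable_shortfall α).aemeasurable (le_max_right _ _) measurableSet_Iic hM
      fun y hy => max_le_max (by linarith [mem_Iic.1 hy]) le_rfl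
  have hc : 0 ≤ ckCR k δ := zero_le_one.trans (one_le_ckCR hk hδ.le)
  have : max (α - M) 0 ≤ ckCR k δ * crNorm k P (fun y => max (α - y) 0) := by
    calc max (α - M) 0 ≤ max (α - M) 0 * (ckCR k δ * P.real (Iic M) ^ ((k - 1) / k)) :=
          le_mul_of_one_le_right (le_max_right _ _) hMc
      _ = ckCR k δ * (max (α - M) 0 * P.real (Iic M) ^ ((k - 1) / k)) := by ring
      _ ≤ _ := mul_le_mul_of_nonneg_left h_lower hc
  linarith [le_max_left (α - M) 0]

end Shortfall

section Coupling

variable {Ω : Type*} [MeasurableSpace Ω] {μ : Measure Ω} [IsProbabilityMeasure μ]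
  {f₁ f₂ : Ω → ℝ} {k δ D : ℝ}

lemma crNorm_shortfall_le_of_coupling (hk : 1 ≤ k) (hf₁ : AEMeasurable f₁ μ)
    (hf₂ : AEMeasurable f₂ μ) (hP₁ : μ.map f₁ (Iio 0) = 0) (hf : ∀ᵐ ω ∂μ, f₁ ω ≤ f₂ ω + D)
    (α : ℝ) :
    crNorm k (μ.map f₂) (fun y => max (α - D - y) 0) ≤
      crNorm k (μ.map f₁) (fun y => max (α - y) 0) := by
  rw [crNorm_map hf₂ (measurable_shortfall _), crNorm_map hf₁ (measurable_shortfall _)]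
  refine crNorm_mono hk (fun _ => le_max_right _ _) ?_
    (ae_of_ae_map hf₁ (ae_shortfall_le hP₁ α)) ((measurable_shortfall α).comp_aemeasurable hf₁)
  filter_upwards [hf] with ω hω
  exact max_le_max (by linarith) le_rfl

lemma dualValueCR_map_le_of_coupling (hk : 1 ≤ k) (hδ : 0 < δ) (hf₁ : AEMeasurable f₁ μ)
    (hf₂ : AEMeasurable f₂ μ) (hP₁ : μ.map f₁ (Iio 0) = 0) (hP₂ : μ.map f₂ (Iio 0) = 0)
    (hf : ∀ᵐ ω ∂μ, f₁ ω ≤ f₂ ω + D) :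
    dualValueCR k δ (μ.map f₁) ≤ dualValueCR k δ (μ.map f₂) + D := by
  have := Measure.isProbabilityMeasure_map hf₂
  rw [dualValueCR_eq, dualValueCR_eq]
  refine ciSup_le fun α => ?_
  have h_sup := le_ciSup (bddAbove_dualValueCR hk hδ hP₂) (α - D)
  have h_norm := crNorm_shortfall_le_of_coupling hk hf₁ hf₂ hP₁ hf α
  have hc : 0 ≤ ckCR k δ := zero_le_one.trans (one_le_ckCR hk hδ.le)
  linarith [mul_le_mul_of_nonneg_left h_norm hc]

end Coupling

section Quantile

variable {P : Measure ℝ} {t : ℝ}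

instance : IsProbabilityMeasure (volume.restrict (Ioo (0 : ℝ) 1)) :=
  ⟨by simp⟩

lemma nonempty_le_cdf (ht : t < 1) : {x | t ≤ cdf P x}.Nonempty :=
  ((tendsto_cdf_atTop P).eventually_const_le ht).exists

lemma bddBelow_le_cdf (ht : 0 < t) : BddBelow {x | t ≤ cdf P x} := by
  obtain ⟨x₀, hx₀⟩ := eventually_atBot.1 ((tendsto_cdf_atBot P).eventually_lt_const ht)
  exact ⟨x₀, fun x hx => le_of_not_gt fun hlt => (hx₀ x hlt.le).not_ge hx⟩

variable [IsProbabilityMeasure P]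

lemma quantile_eq_sInf_cdf (P : Measure ℝ) [IsProbabilityMeasure P] (t : ℝ) :
    quantile P t = sInf {x | t ≤ cdf P x} := by
  simp only [quantile, cdf_eq_real, measureReal_def]

lemma le_cdf_quantile (ht : t < 1) : t ≤ cdf P (quantile P t) := by
  rw [quantile_eq_sInf_cdf]
  refine ge_of_tendsto (((cdf P).right_continuous _).mono_left
    (nhdsWithin_mono _ Ioi_subset_Ici_self)) (eventually_nhdsWithin_of_forall fun x hx => ?_)
  obtain ⟨y, hy, hyx⟩ := exists_lt_of_csInf_lt (nonempty_le_cdf ht) hx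
  exact hy.trans (monotone_cdf P hyx.le)

lemma quantile_le_iff (ht₀ : 0 < t) (ht₁ : t < 1) {x : ℝ} :
    quantile P t ≤ x ↔ t ≤ cdf P x :=
  ⟨fun h => (le_cdf_quantile ht₁).trans (monotone_cdf P h),
    fun h => (quantile_eq_sInf_cdf P t).symm ▸ csInf_le (bddBelow_le_cdf ht₀) h⟩

lemma monotoneOn_quantile : MonotoneOn (quantile P) (Ioo 0 1) := fun t ht t' ht' htt' => by
  rw [quantile_eq_sInf_cdf, quantile_eq_sInf_cdf]
  exact csInf_le_csInf (bddBelow_le_cdf ht.1) (nonempty_le_cdf ht'.2) fun x hx => htt'.trans hx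

lemma aemeasurable_quantile : AEMeasurable (quantile P) (volume.restrict (Ioo 0 1)) :=
  aemeasurable_restrict_of_monotoneOn measurableSet_Ioo monotoneOn_quantile

lemma volume_Iic_inter_Ioo {a : ℝ} (ha : a ≤ 1) :
    volume (Iic a ∩ Ioo 0 1) = ENNReal.ofReal a := by
  refine le_antisymm ?_ ?_
  · calc volume (Iic a ∩ Ioo 0 1) ≤ volume (Ioc 0 a) :=
          measure_mono fun t ht => ⟨ht.2.1, ht.1⟩
      _ = ENNReal.ofReal a := by simp
  · calc ENNReal.ofReal a = volume (Ioo 0 a) := by simp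
      _ ≤ volume (Iic a ∩ Ioo 0 1) :=
          measure_mono fun t ht => ⟨ht.2.le, ht.1, ht.2.trans_le ha⟩

theorem map_quantile (P : Measure ℝ) [IsProbabilityMeasure P] :
    (volume.restrict (Ioo 0 1)).map (quantile P) = P := by
  refine Measure.ext_of_Iic _ _ fun x => ?_
  rw [Measure.map_apply_of_aemeasurable aemeasurable_quantile measurableSet_Iic,
    Measure.restrict_apply' measurableSet_Ioo]
  have h_pre : quantile P ⁻¹' Iic x ∩ Ioo 0 1 = Iic (cdf P x) ∩ Ioo 0 1 := by
    ext t
    simp only [mem_inter_iff, mem_preimage, mem_Iic, and_congr_left_iff]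
    exact fun ht => quantile_le_iff ht.1 ht.2
  rw [h_pre, volume_Iic_inter_Ioo (cdf_le_one P x), ofReal_cdf]

end Quantile

lemma dualValueCR_le_of_quantile_le {k δ D : ℝ} (hk : 1 ≤ k) (hδ : 0 < δ)
    {P₁ P₂ : Measure ℝ} [IsProbabilityMeasure P₁] [IsProbabilityMeasure P₂]
    (hP₁ : P₁ (Iio 0) = 0) (hP₂ : P₂ (Iio 0) = 0)
    (hD : ∀ t ∈ Ioo (0 : ℝ) 1, quantile P₁ t ≤ quantile P₂ t + D) :
    dualValueCR k δ P₁ ≤ dualValueCR k δ P₂ + D := by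
  have h := dualValueCR_map_le_of_coupling hk hδ aemeasurable_quantile aemeasurable_quantile
    (by rwa [map_quantile]) (by rwa [map_quantile]) ((ae_restrict_iff' measurableSet_Ioo).2
      (ae_of_all _ hD))
  rwa [map_quantile, map_quantile] at h

lemma abs_dualValueCR_sub_le {k δ D : ℝ} (hk : 1 ≤ k) (hδ : 0 < δ)
    {P₁ P₂ : Measure ℝ} [IsProbabilityMeasure P₁] [IsProbabilityMeasure P₂]
    (hP₁ : P₁ (Iio 0) = 0) (hP₂ : P₂ (Iio 0) = 0)
    (hD : ∀ t ∈ Ioo (0 : ℝ) 1, |quantile P₁ t - quantile P₂ t| ≤ D) :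
    |dualValueCR k δ P₁ - dualValueCR k δ P₂| ≤ D := by
  have h₁₂ := dualValueCR_le_of_quantile_le (D := D) hk hδ hP₁ hP₂ fun t ht => by
    linarith [(abs_le.1 (hD t ht)).2]
  have h₂₁ := dualValueCR_le_of_quantile_le (D := D) hk hδ hP₂ hP₁ fun t ht => by
    linarith [(abs_le.1 (hD t ht)).1]
  exact abs_le.2 ⟨by linarith, by linarith⟩

/-- **Quantile Lipschitz bound for Cressie–Read DRO dual values:** for `k ∈ [1, ∞)` and
probability measures `P1, P2` supported on `[0, ∞)`, the difference of their dual values is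
bounded by `c_k(δ)` times the uniform distance between their quantile functions (the supremum
is taken in `ℝ≥0∞` so that the inequality is meaningful even when it is infinite). -/
theorem stmt14 (k δ : ℝ) (hk : 1 ≤ k) (hδ : 0 < δ) (P1 P2 : Measure ℝ)
    [IsProbabilityMeasure P1] [IsProbabilityMeasure P2]
    (hP1 : P1 (Set.Iio 0) = 0) (hP2 : P2 (Set.Iio 0) = 0) :
    ENNReal.ofReal |dualValueCR k δ P1 - dualValueCR k δ P2| ≤
      ENNReal.ofReal (ckCR k δ) *
        ⨆ t ∈ Set.Icc (0 : ℝ) 1, ENNReal.ofReal |quantile P1 t - quantile P2 t| := by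
  set T := ⨆ t ∈ Icc (0 : ℝ) 1, ENNReal.ofReal |quantile P1 t - quantile P2 t|
  have hc : 1 ≤ ENNReal.ofReal (ckCR k δ) := ENNReal.one_le_ofReal.2 (one_le_ckCR hk hδ.le)
  refine le_trans ?_ (le_mul_of_one_le_left' hc)
  rcases eq_or_ne T ⊤ with hT | hT
  · exact hT ▸ le_top
  refine ENNReal.ofReal_le_of_le_toReal (abs_dualValueCR_sub_le hk hδ hP1 hP2 fun t ht => ?_)
  exact (ENNReal.ofReal_le_iff_le_toReal hT).1
    (le_biSup (fun t => ENNReal.ofReal |quantile P1 t - quantile P2 t|) (Ioo_subset_Icc_self ht))
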